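/- Let (Ω, 𝒢, P) be a probability space with a filtration (𝒢_t)_{t≥0}, let S = (S_t)_{t≥0} be a nonnegative progressively measurable process, let τ be a stopping time, and let (T_n)_{n≥1} be a nondecreasing sequence of stopping times with T_n → ∞ almost surely. Suppose that for every n the stopped process (S_{t∧τ∧T_n})_{t≥0} is a (𝒢_t)-martingale. Fix t ≥ 0. If liminf_{n→∞} E[S_{T_n} · 1_{{T_n ≤ t∧τ}}] > 0, then E[S_{t∧τ}] < E[S_0]. In particular, the stopped process (S_{s∧τ})_{s≥0} is not a (𝒢_t)-martingale (it is a strict local martingale). -/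

import Mathlib

open MeasureTheory Filter Set
open scoped NNReal Topology

/-!
Each stopped process `S^{τ ∧ T n}` has constant expectation, so
`E[S_0] = E[S_{T n}; T n ≤ t ∧ τ] + E[S_{t ∧ τ}; T n > t ∧ τ]`. As `T n → ∞` the events
`{T n > t ∧ τ}` eventually contain almost every `ω`: Fatou's lemma makes `S_{t ∧ τ}` integrable
and dominated convergence sends the second term to `E[S_{t ∧ τ}]`. Hence the first term converges
to `E[S_0] - E[S_{t ∧ τ}]`, which the liminf hypothesis makes positive.
-/

namespace MeasureTheory

variable {Ω : Type*} {mΩ : MeasurableSpace Ω} {μ : Measure Ω}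

theorem integrable_of_tendsto_ae_of_integral_le {ι : Type*} {u : Filter ι} [u.NeBot]
    [u.IsCountablyGenerated] {f : ι → Ω → ℝ} {g : Ω → ℝ} {C : ℝ}
    (hf : ∀ n, Integrable (f n) μ) (hf_nonneg : ∀ n, 0 ≤ᵐ[μ] f n) (hC : ∀ n, ∫ ω, f n ω ∂μ ≤ C)
    (hlim : ∀ᵐ ω ∂μ, Tendsto (f · ω) u (𝓝 (g ω))) :
    Integrable g μ := by
  have hf_norm : ∀ n, eLpNorm (f n) 1 μ ≤ ENNReal.ofReal C := fun n => by
    rw [eLpNorm_one_eq_lintegral_enorm, ← ofReal_integral_norm_eq_lintegral_enorm (hf n)]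
    refine ENNReal.ofReal_le_ofReal ((integral_congr_ae ?_).trans_le (hC n))
    filter_upwards [hf_nonneg n] with ω hω using Real.norm_of_nonneg hω
  refine memLp_one_iff_integrable.1 ⟨aestronglyMeasurable_of_tendsto_ae u (fun n => (hf n).1) hlim,
    (Lp.eLpNorm_le_of_ae_tendsto (.of_forall hf_norm) (fun n => (hf n).1) hlim).trans_lt
      ENNReal.ofReal_lt_top⟩

theorem tendsto_setIntegral_of_ae_eventually_mem {ι : Type*} {u : Filter ι}
    [u.IsCountablyGenerated] {E : Type*} [NormedAddCommGroup E] [NormedSpace ℝ E]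
    {A : ι → Set Ω} {g : Ω → E} (hA : ∀ n, MeasurableSet (A n)) (hg : Integrable g μ)
    (hmem : ∀ᵐ ω ∂μ, ∀ᶠ n in u, ω ∈ A n) :
    Tendsto (fun n => ∫ ω in A n, g ω ∂μ) u (𝓝 (∫ ω, g ω ∂μ)) := by
  simp_rw [← integral_indicator (hA _)]
  refine tendsto_integral_filter_of_dominated_convergence (fun ω => ‖g ω‖)
    (.of_forall fun n => hg.1.indicator (hA n)) (.of_forall fun n => .of_forall fun ω => ?_)
    hg.norm ?_
  · exact norm_indicator_le_norm_self g ω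
  · filter_upwards [hmem] with ω hω
    exact tendsto_const_nhds.congr' (hω.mono fun n hn => (indicator_of_mem hn g).symm)

theorem tendsto_setIntegral_of_eqOn_compl {ι : Type*} {u : Filter ι} [u.NeBot]
    [u.IsCountablyGenerated] {M : ι → Ω → ℝ} {g : Ω → ℝ} {B : ι → Set Ω} {c : ℝ}
    (hM : ∀ n, Integrable (M n) μ) (hM_nonneg : ∀ n, 0 ≤ᵐ[μ] M n)
    (hM_integral : ∀ n, ∫ ω, M n ω ∂μ = c) (hB : ∀ n, MeasurableSet (B n))
    (hMg : ∀ n, EqOn (M n) g (B n)ᶜ) (h_escape : ∀ᵐ ω ∂μ, ∀ᶠ n in u, ω ∉ B n) :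
    Tendsto (fun n => ∫ ω in B n, M n ω ∂μ) u (𝓝 (c - ∫ ω, g ω ∂μ)) := by
  have hlim : ∀ᵐ ω ∂μ, Tendsto (M · ω) u (𝓝 (g ω)) := by
    filter_upwards [h_escape] with ω hω
    exact tendsto_const_nhds.congr' (hω.mono fun n hn => (hMg n hn).symm)
  have hg : Integrable g μ :=
    integrable_of_tendsto_ae_of_integral_le hM hM_nonneg (fun n => (hM_integral n).le) hlim
  have h_split : ∀ n, ∫ ω in B n, M n ω ∂μ = c - ∫ ω in (B n)ᶜ, g ω ∂μ := fun n => by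
    rw [← setIntegral_congr_fun (hB n).compl (hMg n), ← hM_integral n,
      ← integral_add_compl (hB n) (hM n), add_sub_cancel_right]
  simp_rw [h_split]
  exact tendsto_const_nhds.sub
    (tendsto_setIntegral_of_ae_eventually_mem (fun n => (hB n).compl) hg h_escape)

theorem stoppedProcess_coe {ι β : Type*} [LinearOrder ι] [Nonempty ι] (u : ι → Ω → β)
    (σ : Ω → ι) (i : ι) :
    stoppedProcess u (fun ω => (σ ω : WithTop ι)) i = fun ω => u (min i (σ ω)) ω := by
  ext ω
  rw [stoppedProcess, ← WithTop.coe_min]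
  rfl

theorem Martingale.integral_eq {ι E : Type*} [Preorder ι] [NormedAddCommGroup E] [NormedSpace ℝ E]
    [CompleteSpace E] {ℱ : Filtration ι mΩ} {f : ι → Ω → E} [SigmaFiniteFiltration μ ℱ]
    (hf : Martingale f ℱ μ) {i j : ι} (hij : i ≤ j) :
    ∫ ω, f i ω ∂μ = ∫ ω, f j ω ∂μ := by
  simpa using hf.setIntegral_eq hij MeasurableSet.univ

theorem tendsto_setIntegral_of_martingale_stoppedProcess_min [IsFiniteMeasure μ]
    {𝒢 : Filtration ℝ≥0 mΩ} {S : ℝ≥0 → Ω → ℝ} (hS_nonneg : ∀ t ω, 0 ≤ S t ω)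
    {τ : Ω → ℝ≥0} (hτ : IsStoppingTime 𝒢 (fun ω => (τ ω : WithTop ℝ≥0)))
    {T : ℕ → Ω → ℝ≥0} (hT : ∀ n, IsStoppingTime 𝒢 (fun ω => (T n ω : WithTop ℝ≥0)))
    (hT_tendsto : ∀ᵐ ω ∂μ, Tendsto (fun n => T n ω) atTop atTop)
    (hmart : ∀ n, Martingale (stoppedProcess S fun ω => min (τ ω) (T n ω)) 𝒢 μ)
    (t : ℝ≥0) :
    Tendsto (fun n => ∫ ω in {ω | T n ω ≤ min t (τ ω)}, S (T n ω) ω ∂μ) atTop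
      (𝓝 ((∫ ω, S 0 ω ∂μ) - ∫ ω, S (min t (τ ω)) ω ∂μ)) := by
  -- the `min` in `hmart` is taken in `WithTop ℝ≥0`
  simp only [← WithTop.coe_inf] at hmart
  set B : ℕ → Set Ω := fun n => {ω | T n ω ≤ min t (τ ω)}
  have hB : ∀ n, MeasurableSet (B n) := fun n =>
    measurableSet_le (hT n).measurable'.untopA (measurable_const.min hτ.measurable'.untopA)
  have h_integral : ∀ n, ∫ ω, S (min t (min (τ ω) (T n ω))) ω ∂μ = ∫ ω, S 0 ω ∂μ := fun n => by
    simpa only [stoppedProcess_coe, zero_min] using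
      ((hmart n).integral_eq (zero_le : (0 : ℝ≥0) ≤ t)).symm
  have h_onB : ∀ n, EqOn (fun ω => S (min t (min (τ ω) (T n ω))) ω) (fun ω => S (T n ω) ω)
      (B n) := fun n ω (hω : T n ω ≤ min t (τ ω)) => by
    simp only
    rw [← min_assoc, min_eq_right hω]
  have h_offB : ∀ n, EqOn (fun ω => S (min t (min (τ ω) (T n ω))) ω) (fun ω => S (min t (τ ω)) ω)
      (B n)ᶜ := fun n ω (hω : ¬ T n ω ≤ min t (τ ω)) => by
    simp only
    rw [← min_assoc, min_eq_left (not_le.1 hω).le]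
  have h_escape : ∀ᵐ ω ∂μ, ∀ᶠ n in atTop, ω ∉ B n := by
    filter_upwards [hT_tendsto] with ω hω
    filter_upwards [hω.eventually_gt_atTop t] with n hn
    exact fun h => (h.trans (min_le_left _ _)).not_gt hn
  refine (tendsto_setIntegral_of_eqOn_compl (fun n => ?_)
    (fun n => .of_forall fun ω => hS_nonneg _ ω) h_integral hB h_offB h_escape).congr
    fun n => setIntegral_congr_fun (hB n) (h_onB n)
  simpa only [stoppedProcess_coe] using (hmart n).integrable t

end MeasureTheory

theorem stmt0_general {Ω : Type*} {mΩ : MeasurableSpace Ω} (P : Measure Ω)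
    [IsProbabilityMeasure P] (𝒢 : Filtration ℝ≥0 mΩ)
    (S : ℝ≥0 → Ω → ℝ)
    (hS_nonneg : ∀ t ω, 0 ≤ S t ω)
    (τ : Ω → ℝ≥0) (hτ : IsStoppingTime 𝒢 (fun ω => (τ ω : WithTop ℝ≥0)))
    (T : ℕ → Ω → ℝ≥0) (hT : ∀ n, IsStoppingTime 𝒢 (fun ω => (T n ω : WithTop ℝ≥0)))
    (hT_tendsto : ∀ᵐ ω ∂P, Tendsto (fun n => T n ω) atTop atTop)
    (hmart : ∀ n, Martingale
      (MeasureTheory.stoppedProcess S fun ω => min (τ ω) (T n ω)) 𝒢 P)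
    (t : ℝ≥0)
    (hliminf : 0 < liminf
      (fun n => ∫ ω in {ω | T n ω ≤ min t (τ ω)}, S (T n ω) ω ∂P) atTop) :
    (∫ ω, S (min t (τ ω)) ω ∂P) < (∫ ω, S 0 ω ∂P) ∧
      ¬ Martingale (MeasureTheory.stoppedProcess S (fun ω => (τ ω : WithTop ℝ≥0))) 𝒢 P := by
  have h_lt : (∫ ω, S (min t (τ ω)) ω ∂P) < ∫ ω, S 0 ω ∂P := by
    rw [(tendsto_setIntegral_of_martingale_stoppedProcess_min hS_nonneg hτ hT hT_tendsto hmart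
      t).liminf_eq] at hliminf
    linarith
  refine ⟨h_lt, fun hτ_mart => h_lt.ne ?_⟩
  simpa only [stoppedProcess_coe, zero_min] using
    (hτ_mart.integral_eq (zero_le : (0 : ℝ≥0) ≤ t)).symm

/-- If `S` is a nonnegative progressively measurable process,
`τ` a stopping time, and `(T n)` a nondecreasing sequence of stopping times tending
a.s. to infinity such that each stopped process `S^{τ ∧ T n}` is a martingale, and if
`liminf_n E[S_{T n} 1_{T n ≤ t ∧ τ}] > 0` for a fixed time `t`, then
`E[S_{t ∧ τ}] < E[S_0]`; in particular `S^τ` is not a martingale. -/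
theorem stmt0 {Ω : Type*} {mΩ : MeasurableSpace Ω} (P : Measure Ω)
    [IsProbabilityMeasure P] (𝒢 : Filtration ℝ≥0 mΩ)
    (S : ℝ≥0 → Ω → ℝ) (hprog : ProgMeasurable 𝒢 S)
    (hS_nonneg : ∀ t ω, 0 ≤ S t ω)
    (τ : Ω → ℝ≥0) (hτ : IsStoppingTime 𝒢 (fun ω => (τ ω : WithTop ℝ≥0)))
    (T : ℕ → Ω → ℝ≥0) (hT : ∀ n, IsStoppingTime 𝒢 (fun ω => (T n ω : WithTop ℝ≥0)))
    (hT_mono : ∀ ω, Monotone fun n => T n ω)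
    (hT_tendsto : ∀ᵐ ω ∂P, Tendsto (fun n => T n ω) atTop atTop)
    (hmart : ∀ n, Martingale
      (MeasureTheory.stoppedProcess S fun ω => min (τ ω) (T n ω)) 𝒢 P)
    (t : ℝ≥0)
    (hliminf : 0 < liminf
      (fun n => ∫ ω in {ω | T n ω ≤ min t (τ ω)}, S (T n ω) ω ∂P) atTop) :
    (∫ ω, S (min t (τ ω)) ω ∂P) < (∫ ω, S 0 ω ∂P) ∧
      ¬ Martingale (MeasureTheory.stoppedProcess S (fun ω => (τ ω : WithTop ℝ≥0))) 𝒢 P :=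
  stmt0_general P 𝒢 S hS_nonneg τ hτ T hT hT_tendsto hmart t hliminf
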